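/- arXiv:alg-geom/9401008 — 6 statements merged into one kernel-verified Lean document; each statement's English description precedes it below -/
import Mathlib

section
/- Let T' = (E₁', E₂', Φ') be a subtriple of a holomorphic triple T = (E₁, E₂, Φ) with ranks r₁', r₂', r₁, r₂ and let τ, σ be real numbers related by σ = ((r₁+r₂)/r₂)·(τ − μ(E₁⊕E₂)), equivalently τ = μ_σ(T). Then θ_τ(T') < 0 if and only if μ_σ(T') < μ_σ(T), where θ_τ(T') = (μ(E₁'⊕E₂') − τ) − (r₂'/r₂)·((r₁+r₂)/(r₁'+r₂'))·(μ(E₁⊕E₂) − τ), μ_σ(T') = (deg(E₁'⊕E₂') + r₂'σ)/(r₁'+r₂'), and μ_σ(T) = (deg(E₁⊕E₂) + r₂σ)/(r₁+r₂). -/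
open CategoryTheory CategoryTheory.Limits

noncomputable section

/-- Slope `d/r` of a bundle of degree `d` and rank `r`. -/
def bslope (d : ℤ) (r : ℕ) : ℝ := (d : ℝ) / (r : ℝ)

/-- The quantity `θ_τ(T')` for a subtriple with ranks `r1', r2'` and degrees `d1', d2'`
of a triple with ranks `r1, r2` and degrees `d1, d2`. -/
def thetaTau (τ : ℝ) (r1 r2 : ℕ) (d1 d2 : ℤ) (r1' r2' : ℕ) (d1' d2' : ℤ) : ℝ :=
  (bslope (d1' + d2') (r1' + r2') - τ) -
    ((r2' : ℝ) / (r2 : ℝ)) * (((r1 : ℝ) + (r2 : ℝ)) / ((r1' : ℝ) + (r2' : ℝ))) *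
      (bslope (d1 + d2) (r1 + r2) - τ)

universe v u

variable {C : Type u} [Category.{v} C] [Abelian C]

/-- `(E1', E2')` is a subtriple of `(E1, E2, Φ)` : `Φ` maps `E2'` into `E1'`. -/
def IsSubtriple {E1 E2 : C} (Φ : E2 ⟶ E1) (E1' : Subobject E1) (E2' : Subobject E2) : Prop :=
  E1'.Factors (E2'.arrow ≫ Φ)

/-- `θ_τ` of a subtriple, expressed through rank and degree functions. -/
def theta (rank : C → ℕ) (deg : C → ℤ) (E1 E2 : C) (τ : ℝ)
    (E1' : Subobject E1) (E2' : Subobject E2) : ℝ :=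
  thetaTau τ (rank E1) (rank E2) (deg E1) (deg E2)
    (rank (E1' : C)) (rank (E2' : C)) (deg (E1' : C)) (deg (E2' : C))

/-- τ-stability of the holomorphic triple `(E1, E2, Φ)`. -/
def TStable (rank : C → ℕ) (deg : C → ℤ) (E1 E2 : C) (Φ : E2 ⟶ E1) (τ : ℝ) : Prop :=
  ∀ (E1' : Subobject E1) (E2' : Subobject E2), IsSubtriple Φ E1' E2' →
    ¬(E1' = ⊥ ∧ E2' = ⊥) → ¬(E1' = ⊤ ∧ E2' = ⊤) →
    theta rank deg E1 E2 τ E1' E2' < 0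

/-- τ-semistability of the holomorphic triple `(E1, E2, Φ)`. -/
def TSemistable (rank : C → ℕ) (deg : C → ℤ) (E1 E2 : C) (Φ : E2 ⟶ E1) (τ : ℝ) : Prop :=
  ∀ (E1' : Subobject E1) (E2' : Subobject E2), IsSubtriple Φ E1' E2' →
    ¬(E1' = ⊥ ∧ E2' = ⊥) → ¬(E1' = ⊤ ∧ E2' = ⊤) →
    theta rank deg E1 E2 τ E1' E2' ≤ 0

/-- Slope stability for a single bundle. -/
def BStable (rank : C → ℕ) (deg : C → ℤ) (B : C) : Prop :=
  ∀ X : Subobject B, X ≠ ⊥ → X ≠ ⊤ →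
    bslope (deg (X : C)) (rank (X : C)) < bslope (deg B) (rank B)

/-- Slope semistability for a single bundle. -/
def BSemistable (rank : C → ℕ) (deg : C → ℤ) (B : C) : Prop :=
  ∀ X : Subobject B, X ≠ ⊥ →
    bslope (deg (X : C)) (rank (X : C)) ≤ bslope (deg B) (rank B)

/-- equivalence of the `θ_τ` and `μ_σ` formulations of stability for a
subtriple, when `σ = ((r1+r2)/r2)·(τ − μ(E1⊕E2))`. -/
theorem thetaTau_neg_iff_sigmaSlope_lt
    (r1 r2 r1' r2' : ℕ) (d1 d2 d1' d2' : ℤ) (τ σ : ℝ)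
    (hr2 : 0 < r2) (hr1 : 0 < r1) (hr' : 0 < r1' + r2')
    (hσ : σ = (((r1 : ℝ) + (r2 : ℝ)) / (r2 : ℝ)) * (τ - bslope (d1 + d2) (r1 + r2))) :
    thetaTau τ r1 r2 d1 d2 r1' r2' d1' d2' < 0 ↔
      ((d1' : ℝ) + (d2' : ℝ) + (r2' : ℝ) * σ) / ((r1' : ℝ) + (r2' : ℝ)) <
        ((d1 : ℝ) + (d2 : ℝ) + (r2 : ℝ) * σ) / ((r1 : ℝ) + (r2 : ℝ)) := by
  have hR : (0:ℝ) < (r1:ℝ) + (r2:ℝ) := by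
    have : (0:ℝ) < ((r1:ℕ):ℝ) := by exact_mod_cast hr1
    positivity
  have hr2R : (0:ℝ) < (r2:ℝ) := by exact_mod_cast hr2
  have hr'R : (0:ℝ) < (r1':ℝ) + (r2':ℝ) := by
    have : (0:ℝ) < ((r1'+r2':ℕ):ℝ) := by exact_mod_cast hr'
    push_cast at this; linarith
  have h1 : thetaTau τ r1 r2 d1 d2 r1' r2' d1' d2' =
      ((d1':ℝ) + (d2':ℝ) + (r2':ℝ) * σ) / ((r1':ℝ) + (r2':ℝ)) -
        ((d1:ℝ) + (d2:ℝ) + (r2:ℝ) * σ) / ((r1:ℝ) + (r2:ℝ)) := by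
    subst hσ
    unfold thetaTau bslope
    push_cast
    field_simp
    ring
  rw [h1, sub_neg]
end
end

section
/- If a holomorphic triple T = (E₁, E₂, 0) with Φ = 0 is τ-semistable, then τ = μ(E₁), and moreover every holomorphic subbundle E₁' ⊆ E₁ satisfies μ(E₁') ≤ μ(E₁) (i.e. E₁ is semistable) and every holomorphic subbundle E₂' ⊆ E₂ satisfies μ(E₂') ≤ μ(E₂) (i.e. E₂ is semistable). -/
open CategoryTheory CategoryTheory.Limits

noncomputable section

universe v u

variable {C : Type u} [Category.{v} C] [Abelian C]

/-! With `Φ = 0` every pair of subobjects is a subtriple. The subtriples `(E₁, 0)` and `(0, E₂)`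
give `μ(E₁) ≤ τ` and `τ ≤ μ(E₁)`. Once `τ = μ(E₁)`, the subtriple `(E₁', 0)` has
`θ_τ = μ(E₁') - μ(E₁)` and the subtriple `(0, E₂')` has `θ_τ = μ(E₂') - μ(E₂)`. -/

theorem thetaTau_right_zero (τ : ℝ) (r1 r2 : ℕ) (d1 d2 : ℤ) (r1' : ℕ) (d1' : ℤ) :
    thetaTau τ r1 r2 d1 d2 r1' 0 d1' 0 = bslope d1' r1' - τ := by
  simp [thetaTau]

theorem thetaTau_left_zero (τ : ℝ) {r1 r2 r2' : ℕ} (hr1 : r1 ≠ 0) (hr2 : r2 ≠ 0)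
    (hr2' : r2' ≠ 0) (d1 d2 d2' : ℤ) :
    thetaTau τ r1 r2 d1 d2 0 r2' 0 d2' =
      bslope d2' r2' - bslope d2 r2 + r1 / r2 * (τ - bslope d1 r1) := by
  have hr12 : (r1 : ℝ) + r2 ≠ 0 := by positivity
  simp only [thetaTau, bslope, zero_add, Nat.cast_zero, Int.cast_add, Nat.cast_add]
  field_simp
  ring

theorem isSubtriple_zero {E1 E2 : C} (E1' : Subobject E1) (E2' : Subobject E2) :
    IsSubtriple (0 : E2 ⟶ E1) E1' E2' := by
  rw [IsSubtriple, comp_zero]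
  exact Subobject.factors_zero

theorem deg_bot_eq_zero (deg : C → ℤ)
    (hdeg_add : ∀ (B : C) (X : Subobject B), deg B = deg (X : C) + deg (cokernel X.arrow))
    (hdeg_iso : ∀ A B : C, Nonempty (A ≅ B) → deg A = deg B) (B : C) :
    deg ((⊥ : Subobject B) : C) = 0 := by
  have hcoker : deg (cokernel (⊥ : Subobject B).arrow) = deg B :=
    hdeg_iso _ _ ⟨cokernelIsoOfEq Subobject.bot_arrow ≪≫ cokernelZeroIsoTarget⟩
  linarith [hdeg_add B ⊥]

section

variable (rank : C → ℕ) (deg : C → ℤ) (hrank_bot : ∀ B : C, rank ((⊥ : Subobject B) : C) = 0)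
  (hdeg_bot : ∀ B : C, deg ((⊥ : Subobject B) : C) = 0)
include hrank_bot hdeg_bot

theorem theta_bot_right (E1 E2 : C) (τ : ℝ) (X : Subobject E1) :
    theta rank deg E1 E2 τ X ⊥ = bslope (deg (X : C)) (rank (X : C)) - τ := by
  rw [theta, hrank_bot, hdeg_bot, thetaTau_right_zero]

theorem theta_bot_left {E1 E2 : C} (τ : ℝ) {X : Subobject E2} (hE1 : rank E1 ≠ 0)
    (hE2 : rank E2 ≠ 0) (hX : rank (X : C) ≠ 0) :
    theta rank deg E1 E2 τ ⊥ X = bslope (deg (X : C)) (rank (X : C)) -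
      bslope (deg E2) (rank E2) + rank E1 / rank E2 * (τ - bslope (deg E1) (rank E1)) := by
  rw [theta, hrank_bot, hdeg_bot, thetaTau_left_zero _ hE1 hE2 hX]

end

theorem bot_ne_top_of_rank_pos (rank : C → ℕ) {B : C}
    (hrank_bot : rank ((⊥ : Subobject B) : C) = 0)
    (hrank_top : rank ((⊤ : Subobject B) : C) = rank B) (hB : 0 < rank B) :
    (⊥ : Subobject B) ≠ ⊤ := by
  intro h
  rw [h, hrank_top] at hrank_bot
  omega

theorem tSemistable_of_phi_zero_general
    (rank : C → ℕ) (deg : C → ℤ) (E1 E2 : C) (τ : ℝ)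
    (hrank_bot : ∀ (B : C) (X : Subobject B), X = ⊥ ↔ rank (X : C) = 0)
    (hrank_top : ∀ B : C, rank ((⊤ : Subobject B) : C) = rank B)
    (hdeg_top : ∀ B : C, deg ((⊤ : Subobject B) : C) = deg B)
    (hdeg_add : ∀ (B : C) (X : Subobject B), deg B = deg (X : C) + deg (cokernel X.arrow))
    (hiso : ∀ A B : C, Nonempty (A ≅ B) → rank A = rank B ∧ deg A = deg B)
    (h1 : 0 < rank E1) (h2 : 0 < rank E2)
    (hss : TSemistable rank deg E1 E2 (0 : E2 ⟶ E1) τ) :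
    τ = bslope (deg E1) (rank E1) ∧
      BSemistable rank deg E1 ∧ BSemistable rank deg E2 := by
  have hθ : ∀ (A : Subobject E1) (B : Subobject E2), ¬(A = ⊥ ∧ B = ⊥) → ¬(A = ⊤ ∧ B = ⊤) →
      theta rank deg E1 E2 τ A B ≤ 0 := fun A B => hss A B (isSubtriple_zero A B)
  have hrank_bot' : ∀ B : C, rank ((⊥ : Subobject B) : C) = 0 := fun B => (hrank_bot B ⊥).mp rfl
  have hdeg_bot := deg_bot_eq_zero deg hdeg_add fun A B h => (hiso A B h).2
  have hbot_ne_top₁ := bot_ne_top_of_rank_pos rank (hrank_bot' E1) (hrank_top E1) h1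
  have hbot_ne_top₂ := bot_ne_top_of_rank_pos rank (hrank_bot' E2) (hrank_top E2) h2
  have hθ_left := theta_bot_right rank deg hrank_bot' hdeg_bot E1 E2 τ
  have hθ_right (X : Subobject E2) (hX : X ≠ ⊥) :=
    theta_bot_left rank deg hrank_bot' hdeg_bot τ h1.ne' h2.ne' (mt (hrank_bot E2 X).mpr hX)
  have hle : bslope (deg E1) (rank E1) ≤ τ := by
    have h := hθ ⊤ ⊥ (fun h => hbot_ne_top₁ h.1.symm) (fun h => hbot_ne_top₂ h.2)
    rw [hθ_left, hrank_top, hdeg_top] at h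
    linarith
  have hge : τ ≤ bslope (deg E1) (rank E1) := by
    have h := hθ ⊥ ⊤ (fun h => hbot_ne_top₂ h.2.symm) (fun h => hbot_ne_top₁ h.1)
    rw [hθ_right ⊤ hbot_ne_top₂.symm, hrank_top, hdeg_top, sub_self, zero_add] at h
    exact sub_nonpos.mp (nonpos_of_mul_nonpos_right h (by positivity))
  have hτ : τ = bslope (deg E1) (rank E1) := le_antisymm hge hle
  refine ⟨hτ, fun X hX => ?_, fun X hX => ?_⟩
  · have h := hθ X ⊥ (fun h => hX h.1) (fun h => hbot_ne_top₂ h.2)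
    rw [hθ_left] at h
    linarith
  · have h := hθ ⊥ X (fun h => hX h.2) (fun h => hbot_ne_top₁ h.1)
    rw [hθ_right X hX, ← hτ, sub_self, mul_zero, add_zero] at h
    linarith

/-- a triple with `Φ = 0` is `τ`-semistable only if `τ = μ(E₁)` and both
bundles are semistable. -/
theorem tSemistable_of_phi_zero
    (rank : C → ℕ) (deg : C → ℤ) (E1 E2 : C) (τ : ℝ)
    (hrank_bot : ∀ (B : C) (X : Subobject B), X = ⊥ ↔ rank (X : C) = 0)
    (hrank_top : ∀ B : C, rank ((⊤ : Subobject B) : C) = rank B)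
    (hdeg_top : ∀ B : C, deg ((⊤ : Subobject B) : C) = deg B)
    (hrank_add : ∀ (B : C) (X : Subobject B), rank B = rank (X : C) + rank (cokernel X.arrow))
    (hdeg_add : ∀ (B : C) (X : Subobject B), deg B = deg (X : C) + deg (cokernel X.arrow))
    (hiso : ∀ A B : C, Nonempty (A ≅ B) → rank A = rank B ∧ deg A = deg B)
    (h1 : 0 < rank E1) (h2 : 0 < rank E2)
    (hss : TSemistable rank deg E1 E2 (0 : E2 ⟶ E1) τ) :
    τ = bslope (deg E1) (rank E1) ∧
      BSemistable rank deg E1 ∧ BSemistable rank deg E2 :=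
  tSemistable_of_phi_zero_general rank deg E1 E2 τ hrank_bot hrank_top hdeg_top hdeg_add hiso h1 h2
    hss
end
end

section
/- Let (E₁, E₂, Φ) be a τ-stable triple and τ' defined by r₁τ + r₂τ' = deg E₁ + deg E₂. Then (1) τ > μ(E₁), (2) τ' < μ(E₂), and (3) τ − τ' > 0. Equivalently, for σ-stability: σ > μ(E₁) − μ(E₂) and σ > 0. -/
open CategoryTheory CategoryTheory.Limits

noncomputable section

universe v u

variable {C : Type u} [Category.{v} C] [Abelian C]

/-!
Here `r₁ τ + r₂ τ' = d₁ + d₂`. Clearing denominators, `θ_τ(E₁', E₂') < 0` says exactly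
`d₁' + d₂' < r₁' τ + r₂' τ'`, so stability bounds the degree of every proper subtriple by a
linear form in its ranks. The subtriple `(E₁, 0)` gives `d₁ < r₁ τ`, hence `d₂ > r₂ τ'`.
Let `K` and `I` be the kernel and image of `Φ`. The subtriple `(0, K)` gives
`deg K ≤ rank K · τ'`, so by additivity `deg I > rank I · τ'`; the subtriple `(I, E₂)`
(or `(E₁, 0)` when `I = E₁`) gives `deg I < rank I · τ`. Hence `τ' < τ`, and `σ = τ - τ'`.
-/

theorem thetaTau_eq_div {τ τ' : ℝ} {r1 r2 r1' r2' : ℕ} {d1 d2 d1' d2' : ℤ} (hr2 : 0 < r2)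
    (hr' : 0 < r1' + r2') (hττ' : (r1 : ℝ) * τ + r2 * τ' = d1 + d2) :
    thetaTau τ r1 r2 d1 d2 r1' r2' d1' d2' =
      ((d1' + d2' : ℝ) - (r1' * τ + r2' * τ')) / (r1' + r2') := by
  have hr2 : (0 : ℝ) < r2 := by exact_mod_cast hr2
  have hr' : (0 : ℝ) < r1' + r2' := by exact_mod_cast hr'
  unfold thetaTau bslope
  push_cast
  rw [← hττ']
  field_simp
  ring

theorem thetaTau_neg_iff {τ τ' : ℝ} {r1 r2 r1' r2' : ℕ} {d1 d2 d1' d2' : ℤ} (hr2 : 0 < r2)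
    (hr' : 0 < r1' + r2') (hττ' : (r1 : ℝ) * τ + r2 * τ' = d1 + d2) :
    thetaTau τ r1 r2 d1 d2 r1' r2' d1' d2' < 0 ↔ (d1' + d2' : ℝ) < r1' * τ + r2' * τ' := by
  have hr'ℝ : (0 : ℝ) < r1' + r2' := by exact_mod_cast hr'
  rw [thetaTau_eq_div hr2 hr' hττ', div_lt_iff₀ hr'ℝ, zero_mul, sub_neg]

theorem isSubtriple_top_bot {E1 E2 : C} (Φ : E2 ⟶ E1) : IsSubtriple Φ ⊤ ⊥ :=
  Subobject.top_factors _

theorem isSubtriple_bot_kernelSubobject {E1 E2 : C} (Φ : E2 ⟶ E1) :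
    IsSubtriple Φ ⊥ (kernelSubobject Φ) := by
  rw [IsSubtriple, kernelSubobject_arrow_comp]
  exact Subobject.factors_zero

theorem isSubtriple_imageSubobject_top {E1 E2 : C} (Φ : E2 ⟶ E1) :
    IsSubtriple Φ (imageSubobject Φ) ⊤ :=
  imageSubobject_factors_comp_self Φ _

/-- In an abelian category the coimage is the image. -/
def cokernelKernelSubobjectIsoImageSubobject {X Y : C} (f : X ⟶ Y) :
    cokernel (kernelSubobject f).arrow ≅ (imageSubobject f : C) :=
  cokernelIsoOfEq (kernelSubobject_arrow f).symm ≪≫ cokernelEpiComp _ (kernel.ι f) ≪≫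
    Abelian.coimageIsoImage' f ≪≫ (imageSubobjectIso f).symm

theorem apply_eq_kernelSubobject_add_imageSubobject {M : Type*} [AddCommMonoid M] (f : C → M)
    (hadd : ∀ (B : C) (X : Subobject B), f B = f (X : C) + f (cokernel X.arrow))
    (hiso : ∀ A B : C, Nonempty (A ≅ B) → f A = f B) {X Y : C} (φ : X ⟶ Y) :
    f X = f (kernelSubobject φ : C) + f (imageSubobject φ : C) := by
  rw [hadd X (kernelSubobject φ), hiso _ _ ⟨cokernelKernelSubobjectIsoImageSubobject φ⟩]

theorem apply_bot_eq_zero {M : Type*} [AddCommMonoid M] [IsRightCancelAdd M] (f : C → M)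
    (hadd : ∀ (B : C) (X : Subobject B), f B = f (X : C) + f (cokernel X.arrow))
    (hiso : ∀ A B : C, Nonempty (A ≅ B) → f A = f B) (B : C) :
    f ((⊥ : Subobject B) : C) = 0 := by
  have hcoker : f (cokernel (⊥ : Subobject B).arrow) = f B :=
    hiso _ _ ⟨cokernelIsoOfEq Subobject.bot_arrow ≪≫ cokernelZeroIsoTarget⟩
  have := hadd B ⊥
  rw [hcoker] at this
  exact add_eq_right.mp this.symm

/-- The properties of the rank and degree of vector bundles used by stability arguments. -/
structure IsRankDegree (rank : C → ℕ) (deg : C → ℤ) : Prop where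
  eq_bot_iff : ∀ (B : C) (X : Subobject B), X = ⊥ ↔ rank (X : C) = 0
  rank_top : ∀ B : C, rank ((⊤ : Subobject B) : C) = rank B
  deg_top : ∀ B : C, deg ((⊤ : Subobject B) : C) = deg B
  rank_add : ∀ (B : C) (X : Subobject B), rank B = rank (X : C) + rank (cokernel X.arrow)
  deg_add : ∀ (B : C) (X : Subobject B), deg B = deg (X : C) + deg (cokernel X.arrow)
  iso : ∀ A B : C, Nonempty (A ≅ B) → rank A = rank B ∧ deg A = deg B

namespace IsRankDegree

variable {rank : C → ℕ} {deg : C → ℤ}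

theorem rank_bot (hrd : IsRankDegree rank deg) (B : C) : rank ((⊥ : Subobject B) : C) = 0 :=
  (hrd.eq_bot_iff B ⊥).mp rfl

theorem deg_bot (hrd : IsRankDegree rank deg) (B : C) : deg ((⊥ : Subobject B) : C) = 0 :=
  apply_bot_eq_zero deg hrd.deg_add (fun A B h => (hrd.iso A B h).2) B

theorem bot_ne_top (hrd : IsRankDegree rank deg) {B : C} (hB : 0 < rank B) :
    (⊥ : Subobject B) ≠ ⊤ := by
  intro h
  have := hrd.rank_bot B
  rw [h, hrd.rank_top] at this
  omega

theorem rank_eq_kernel_add_image (hrd : IsRankDegree rank deg) {X Y : C} (φ : X ⟶ Y) :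
    (rank X : ℝ) = rank (kernelSubobject φ : C) + rank (imageSubobject φ : C) := by
  exact_mod_cast apply_eq_kernelSubobject_add_imageSubobject rank hrd.rank_add
    (fun A B h => (hrd.iso A B h).1) φ

theorem deg_eq_kernel_add_image (hrd : IsRankDegree rank deg) {X Y : C} (φ : X ⟶ Y) :
    (deg X : ℝ) = deg (kernelSubobject φ : C) + deg (imageSubobject φ : C) := by
  exact_mod_cast apply_eq_kernelSubobject_add_imageSubobject deg hrd.deg_add
    (fun A B h => (hrd.iso A B h).2) φ

end IsRankDegree

namespace TStable

variable {rank : C → ℕ} {deg : C → ℤ} {E1 E2 : C} {Φ : E2 ⟶ E1} {τ τ' : ℝ}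

theorem deg_add_deg_lt (hst : TStable rank deg E1 E2 Φ τ) (hrd : IsRankDegree rank deg)
    (h2 : 0 < rank E2) (hττ' : (rank E1 : ℝ) * τ + rank E2 * τ' = deg E1 + deg E2)
    {E1' : Subobject E1} {E2' : Subobject E2} (hsub : IsSubtriple Φ E1' E2')
    (hpos : 0 < rank (E1' : C) + rank (E2' : C)) (hne_top : ¬(E1' = ⊤ ∧ E2' = ⊤)) :
    (deg (E1' : C) : ℝ) + deg (E2' : C) < rank (E1' : C) * τ + rank (E2' : C) * τ' := by
  refine (thetaTau_neg_iff h2 hpos hττ').mp (hst E1' E2' hsub ?_ hne_top)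
  rintro ⟨rfl, rfl⟩
  simp [hrd.rank_bot] at hpos

theorem deg_target_lt (hst : TStable rank deg E1 E2 Φ τ) (hrd : IsRankDegree rank deg)
    (h1 : 0 < rank E1) (h2 : 0 < rank E2)
    (hττ' : (rank E1 : ℝ) * τ + rank E2 * τ' = deg E1 + deg E2) :
    (deg E1 : ℝ) < rank E1 * τ := by
  have := hst.deg_add_deg_lt hrd h2 hττ' (isSubtriple_top_bot Φ)
    (by simpa [hrd.rank_top, hrd.rank_bot] using h1) (fun h => hrd.bot_ne_top h2 h.2)
  simpa [hrd.rank_top, hrd.deg_top, hrd.rank_bot, hrd.deg_bot] using this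

theorem lt_deg_source (hst : TStable rank deg E1 E2 Φ τ) (hrd : IsRankDegree rank deg)
    (h1 : 0 < rank E1) (h2 : 0 < rank E2)
    (hττ' : (rank E1 : ℝ) * τ + rank E2 * τ' = deg E1 + deg E2) :
    (rank E2 : ℝ) * τ' < deg E2 := by
  linarith [hst.deg_target_lt hrd h1 h2 hττ']

theorem deg_kernelSubobject_le (hst : TStable rank deg E1 E2 Φ τ) (hrd : IsRankDegree rank deg)
    (h1 : 0 < rank E1) (h2 : 0 < rank E2)
    (hττ' : (rank E1 : ℝ) * τ + rank E2 * τ' = deg E1 + deg E2) :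
    (deg (kernelSubobject Φ : C) : ℝ) ≤ rank (kernelSubobject Φ : C) * τ' := by
  rcases eq_or_ne (kernelSubobject Φ) ⊥ with hK | hK
  · simp [hK, hrd.rank_bot, hrd.deg_bot]
  · have hpos : 0 < rank (kernelSubobject Φ : C) :=
      Nat.pos_of_ne_zero fun h => hK ((hrd.eq_bot_iff _ _).mpr h)
    have := hst.deg_add_deg_lt hrd h2 hττ' (isSubtriple_bot_kernelSubobject Φ)
      (by simpa [hrd.rank_bot] using hpos) (fun h => hrd.bot_ne_top h1 h.1)
    simp only [hrd.rank_bot, hrd.deg_bot, Nat.cast_zero, Int.cast_zero, zero_mul,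
      zero_add] at this
    exact this.le

theorem lt_deg_imageSubobject (hst : TStable rank deg E1 E2 Φ τ) (hrd : IsRankDegree rank deg)
    (h1 : 0 < rank E1) (h2 : 0 < rank E2)
    (hττ' : (rank E1 : ℝ) * τ + rank E2 * τ' = deg E1 + deg E2) :
    (rank (imageSubobject Φ : C) : ℝ) * τ' < deg (imageSubobject Φ : C) := by
  have hK := hst.deg_kernelSubobject_le hrd h1 h2 hττ'
  have hE2 := hst.lt_deg_source hrd h1 h2 hττ'
  rw [hrd.rank_eq_kernel_add_image Φ, hrd.deg_eq_kernel_add_image Φ] at hE2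
  linarith

theorem deg_imageSubobject_lt (hst : TStable rank deg E1 E2 Φ τ) (hrd : IsRankDegree rank deg)
    (h1 : 0 < rank E1) (h2 : 0 < rank E2)
    (hττ' : (rank E1 : ℝ) * τ + rank E2 * τ' = deg E1 + deg E2) :
    (deg (imageSubobject Φ : C) : ℝ) < rank (imageSubobject Φ : C) * τ := by
  rcases eq_or_ne (imageSubobject Φ) ⊤ with hI | hI
  · simpa [hI, hrd.rank_top, hrd.deg_top] using hst.deg_target_lt hrd h1 h2 hττ'
  · have := hst.deg_add_deg_lt hrd h2 hττ' (isSubtriple_imageSubobject_top Φ)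
      (by simpa [hrd.rank_top] using Nat.add_pos_right _ h2) (fun h => hI h.1)
    simp only [hrd.rank_top, hrd.deg_top] at this
    linarith [hst.lt_deg_source hrd h1 h2 hττ']

theorem sub_pos (hst : TStable rank deg E1 E2 Φ τ) (hrd : IsRankDegree rank deg)
    (h1 : 0 < rank E1) (h2 : 0 < rank E2)
    (hττ' : (rank E1 : ℝ) * τ + rank E2 * τ' = deg E1 + deg E2) : 0 < τ - τ' :=
  _root_.sub_pos.mpr <| lt_of_mul_lt_mul_left ((hst.lt_deg_imageSubobject hrd h1 h2 hττ').trans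
    (hst.deg_imageSubobject_lt hrd h1 h2 hττ')) (Nat.cast_nonneg _)

end TStable

/-- constraints on the parameters of a `τ`-stable triple:
`τ > μ(E₁)`, `τ' < μ(E₂)`, `τ − τ' > 0`; equivalently `σ > μ(E₁) − μ(E₂)` and `σ > 0`. -/
theorem parameter_bounds_of_tStable
    (rank : C → ℕ) (deg : C → ℤ) (E1 E2 : C) (Φ : E2 ⟶ E1) (τ τ' : ℝ)
    (hrank_bot : ∀ (B : C) (X : Subobject B), X = ⊥ ↔ rank (X : C) = 0)
    (hrank_top : ∀ B : C, rank ((⊤ : Subobject B) : C) = rank B)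
    (hdeg_top : ∀ B : C, deg ((⊤ : Subobject B) : C) = deg B)
    (hrank_add : ∀ (B : C) (X : Subobject B), rank B = rank (X : C) + rank (cokernel X.arrow))
    (hdeg_add : ∀ (B : C) (X : Subobject B), deg B = deg (X : C) + deg (cokernel X.arrow))
    (hiso : ∀ A B : C, Nonempty (A ≅ B) → rank A = rank B ∧ deg A = deg B)
    (h1 : 0 < rank E1) (h2 : 0 < rank E2)
    (hττ' : (rank E1 : ℝ) * τ + (rank E2 : ℝ) * τ' = (deg E1 : ℝ) + (deg E2 : ℝ))
    (hst : TStable rank deg E1 E2 Φ τ) :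
    (bslope (deg E1) (rank E1) < τ ∧ τ' < bslope (deg E2) (rank E2) ∧ 0 < τ - τ') ∧
      (∀ σ : ℝ,
        σ = (((rank E1 : ℝ) + (rank E2 : ℝ)) * τ - ((deg E1 : ℝ) + (deg E2 : ℝ))) /
              (rank E2 : ℝ) →
        bslope (deg E1) (rank E1) - bslope (deg E2) (rank E2) < σ ∧ 0 < σ) := by
  have hrd : IsRankDegree rank deg :=
    ⟨hrank_bot, hrank_top, hdeg_top, hrank_add, hdeg_add, hiso⟩
  have hr1 : (0 : ℝ) < rank E1 := by exact_mod_cast h1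
  have hr2 : (0 : ℝ) < rank E2 := by exact_mod_cast h2
  have hμ1 : bslope (deg E1) (rank E1) < τ :=
    (div_lt_iff₀ hr1).mpr (by linarith [hst.deg_target_lt hrd h1 h2 hττ'])
  have hμ2 : τ' < bslope (deg E2) (rank E2) :=
    (lt_div_iff₀ hr2).mpr (by linarith [hst.lt_deg_source hrd h1 h2 hττ'])
  have hτ : 0 < τ - τ' := hst.sub_pos hrd h1 h2 hττ'
  refine ⟨⟨hμ1, hμ2, hτ⟩, fun σ hσ => ?_⟩
  have hστ : σ = τ - τ' := by
    rw [hσ, div_eq_iff hr2.ne']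
    linarith
  exact ⟨by linarith, hστ ▸ hτ⟩
end
end

section
/- If rank E₁ ≠ rank E₂, then a holomorphic triple (E₁, E₂, Φ) cannot be τ-stable for any τ unless μ(E₂) < μ(E₁). -/
open CategoryTheory CategoryTheory.Limits

noncomputable section

universe v u

variable {C : Type u} [Category.{v} C] [Abelian C]

lemma key_ineq (τ : ℝ) (r1 r2 r1' r2' : ℕ) (d1 d2 d1' d2' : ℤ)
    (h2 : 0 < r2) (h' : 0 < r1' + r2')
    (h : thetaTau τ r1 r2 d1 d2 r1' r2' d1' d2' < 0) :
    (r2 : ℝ) * ((d1' : ℝ) + (d2' : ℝ)) - (r2' : ℝ) * ((d1 : ℝ) + (d2 : ℝ))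
      < ((r2 : ℝ) * (r1' : ℝ) - (r1 : ℝ) * (r2' : ℝ)) * τ := by
  have hb : (0:ℝ) < (r2:ℝ) := by exact_mod_cast h2
  have ha : (0:ℝ) < (r1':ℝ) + (r2':ℝ) := by
    have : (0:ℝ) < ((r1' + r2' : ℕ) : ℝ) := by exact_mod_cast h'
    push_cast at this; linarith
  have hp : (0:ℝ) < (r1:ℝ) + (r2:ℝ) := by positivity
  unfold thetaTau bslope at h
  push_cast at h
  have h7 := mul_neg_of_pos_of_neg (mul_pos ha hb) h
  have heq : ((r1':ℝ) + (r2':ℝ)) * (r2:ℝ) *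
      (((d1':ℝ) + (d2':ℝ)) / ((r1':ℝ) + (r2':ℝ)) - τ -
        (r2':ℝ) / (r2:ℝ) * (((r1:ℝ) + (r2:ℝ)) / ((r1':ℝ) + (r2':ℝ))) *
          (((d1:ℝ) + (d2:ℝ)) / ((r1:ℝ) + (r2:ℝ)) - τ))
      = ((r2:ℝ) * ((d1':ℝ) + (d2':ℝ)) - (r2':ℝ) * ((d1:ℝ) + (d2:ℝ)))
        - ((r2:ℝ) * (r1':ℝ) - (r1:ℝ) * (r2':ℝ)) * τ := by
    field_simp
    ring
  rw [heq] at h7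
  linarith


set_option maxHeartbeats 1000000 in
/-- if `rank E₁ ≠ rank E₂` then a triple can only be `τ`-stable (for some
`τ`) when `μ(E₂) < μ(E₁)`. -/
theorem slope_lt_of_tStable_of_rank_ne
    (rank : C → ℕ) (deg : C → ℤ) (E1 E2 : C) (Φ : E2 ⟶ E1)
    (hrank_bot : ∀ (B : C) (X : Subobject B), X = ⊥ ↔ rank (X : C) = 0)
    (hrank_top : ∀ B : C, rank ((⊤ : Subobject B) : C) = rank B)
    (hdeg_top : ∀ B : C, deg ((⊤ : Subobject B) : C) = deg B)
    (hrank_add : ∀ (B : C) (X : Subobject B), rank B = rank (X : C) + rank (cokernel X.arrow))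
    (hdeg_add : ∀ (B : C) (X : Subobject B), deg B = deg (X : C) + deg (cokernel X.arrow))
    (hiso : ∀ A B : C, Nonempty (A ≅ B) → rank A = rank B ∧ deg A = deg B)
    (h1 : 0 < rank E1) (h2 : 0 < rank E2) (hne : rank E1 ≠ rank E2) :
    ∀ τ : ℝ, TStable rank deg E1 E2 Φ τ →
      bslope (deg E2) (rank E2) < bslope (deg E1) (rank E1) := by
  intro τ hst
  have hR1 : (0:ℝ) < (rank E1 : ℝ) := by exact_mod_cast h1
  have hR2 : (0:ℝ) < (rank E2 : ℝ) := by exact_mod_cast h2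
  -- degree of the bottom subobject is zero
  have hdegbot : ∀ B : C, deg ((⊥ : Subobject B) : C) = 0 := by
    intro B
    have hadd := hdeg_add B ⊥
    have hi : Nonempty (cokernel (⊥ : Subobject B).arrow ≅ B) :=
      ⟨cokernelIsoOfEq (Subobject.bot_arrow) ≪≫ cokernelZeroIsoTarget⟩
    have := (hiso _ _ hi).2
    omega
  have hrankbot : ∀ B : C, rank ((⊥ : Subobject B) : C) = 0 :=
    fun B => (hrank_bot B ⊥).mp rfl
  have hbt1 : (⊥ : Subobject E1) ≠ ⊤ := by
    intro h
    have := (hrank_bot E1 ⊤).mp h.symm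
    rw [hrank_top] at this
    omega
  have hbt2 : (⊥ : Subobject E2) ≠ ⊤ := by
    intro h
    have := (hrank_bot E2 ⊤).mp h.symm
    rw [hrank_top] at this
    omega
  -- reduce the goal
  suffices hgoal : (rank E1 : ℝ) * (deg E2 : ℝ) < (rank E2 : ℝ) * (deg E1 : ℝ) by
    unfold bslope
    rw [div_lt_div_iff₀ hR2 hR1]
    linarith
  -- inequality A from the subtriple (⊤, ⊥)
  have hsubA : IsSubtriple Φ (⊤ : Subobject E1) (⊥ : Subobject E2) :=
    Subobject.top_factors _
  have hA0 := hst ⊤ ⊥ hsubA (fun h => hbt1 h.1.symm) (fun h => hbt2 h.2)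
  unfold theta at hA0
  rw [hrank_top, hrankbot, hdeg_top, hdegbot] at hA0
  have hA1 := key_ineq τ (rank E1) (rank E2) (rank E1) 0 (deg E1) (deg E2) (deg E1) 0
    h2 (by omega) hA0
  push_cast at hA1
  have hA : (deg E1 : ℝ) < (rank E1 : ℝ) * τ := by
    have h' : (rank E2 : ℝ) * (deg E1 : ℝ) < (rank E2 : ℝ) * ((rank E1 : ℝ) * τ) := by
      nlinarith [hA1]
    exact (mul_lt_mul_iff_right₀ hR2).mp h'
  by_cases hphi : Φ = 0
  · -- Φ = 0 : the subtriple (⊥, ⊤) contradicts A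
    exfalso
    have hsub : IsSubtriple Φ (⊥ : Subobject E1) (⊤ : Subobject E2) := by
      unfold IsSubtriple
      rw [hphi, comp_zero]
      exact Subobject.factors_zero
    have h0 := hst ⊥ ⊤ hsub (fun h => hbt2 h.2.symm) (fun h => hbt1 h.1)
    unfold theta at h0
    rw [hrank_top, hrankbot, hdeg_top, hdegbot] at h0
    have h3 := key_ineq τ (rank E1) (rank E2) 0 (rank E2) (deg E1) (deg E2) 0 (deg E2)
      h2 (by omega) h0
    push_cast at h3
    nlinarith [h3, hA, hR2, mul_lt_mul_of_pos_left hA hR2]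
  · -- Φ ≠ 0
    set K := kernelSubobject Φ with hKdef
    set I := imageSubobject Φ with hIdef
    have hKtop : K ≠ ⊤ := by
      intro h
      apply hphi
      have h0 := kernelSubobject_arrow_comp Φ
      rw [← hKdef, h] at h0
      rwa [← cancel_epi (⊤ : Subobject E2).arrow, comp_zero]
    have hIbot : I ≠ ⊥ := by
      intro h
      apply hphi
      have h0 : I.Factors Φ := by
        rw [← imageSubobject_arrow_comp Φ]
        exact Subobject.factors_comp_arrow _
      rw [h, Subobject.bot_factors_iff_zero] at h0
      exact h0
    have hcoim : Nonempty (cokernel K.arrow ≅ (I : C)) := by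
      refine ⟨?_⟩
      calc cokernel K.arrow
          ≅ cokernel ((kernelSubobjectIso Φ).hom ≫ kernel.ι Φ) :=
            cokernelIsoOfEq (kernelSubobject_arrow Φ).symm
        _ ≅ cokernel (kernel.ι Φ) := cokernelEpiComp _ _
        _ ≅ Abelian.image Φ := Abelian.coimageIsoImage Φ
        _ ≅ image Φ := Abelian.imageIsoImage Φ
        _ ≅ (I : C) := (imageSubobjectIso Φ).symm
    have hr2k : rank E2 = rank (K : C) + rank (I : C) := by
      rw [hrank_add E2 K, (hiso _ _ hcoim).1]
    have hd2e : deg E2 = deg (K : C) + deg (I : C) := by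
      rw [hdeg_add E2 K, (hiso _ _ hcoim).2]
    have hrr1 : rank (I : C) ≤ rank E1 := by
      rw [hrank_add E1 I]; omega
    have hrpos : 0 < rank (I : C) :=
      Nat.pos_of_ne_zero (fun h => hIbot ((hrank_bot E1 I).mpr h))
    -- inequality B from the subtriple (⊤, K)
    have hB0 := hst ⊤ K (Subobject.top_factors _)
      (fun h => hbt1 h.1.symm) (fun h => hKtop h.2)
    unfold theta at hB0
    rw [hrank_top, hdeg_top] at hB0
    have hB := key_ineq τ (rank E1) (rank E2) (rank E1) (rank (K : C))
      (deg E1) (deg E2) (deg E1) (deg (K : C)) h2 (by omega) hB0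
    by_cases hItop : I = ⊤
    · -- image is everything
      have hrI : rank (I : C) = rank E1 := by rw [hItop, hrank_top]
      have hdI : deg (I : C) = deg E1 := by rw [hItop, hdeg_top]
      have hkpos : 0 < rank (K : C) := by omega
      have hKbot : K ≠ ⊥ := by
        intro h
        have := (hrank_bot E2 K).mp h
        omega
      have hsubD : IsSubtriple Φ (⊥ : Subobject E1) K := by
        unfold IsSubtriple
        rw [kernelSubobject_arrow_comp]
        exact Subobject.factors_zero
      have hD0 := hst ⊥ K hsubD (fun h => hKbot h.2) (fun h => hbt1 h.1)
      unfold theta at hD0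
      rw [hrankbot, hdegbot] at hD0
      have hD := key_ineq τ (rank E1) (rank E2) 0 (rank (K : C))
        (deg E1) (deg E2) 0 (deg (K : C)) h2 (by omega) hD0
      push_cast at hD
      have hke : (deg (K : C) : ℝ) = (deg E2 : ℝ) - (deg E1 : ℝ) := by
        have : deg (K : C) = deg E2 - deg E1 := by omega
        rw [this]; push_cast; ring
      have hkk : (rank (K : C) : ℝ) = (rank E2 : ℝ) - (rank E1 : ℝ) := by
        have : rank (K : C) = rank E2 - rank E1 := by omega
        rw [this]; push_cast [Nat.cast_sub (by omega : rank E1 ≤ rank E2)]; ring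
      rw [hke, hkk] at hD
      have hr12 : (rank E1 : ℝ) < (rank E2 : ℝ) := by
        have : rank E1 < rank E2 := by omega
        exact_mod_cast this
      nlinarith [hD, hA, mul_pos (sub_pos.mpr hr12) (sub_pos.mpr hA)]
    · -- inequality C from the subtriple (I, ⊤)
      have hsubC : IsSubtriple Φ I (⊤ : Subobject E2) := by
        unfold IsSubtriple
        rw [← imageSubobject_arrow_comp Φ, ← Category.assoc]
        exact Subobject.factors_comp_arrow _
      have hC0 := hst I ⊤ hsubC (fun h => hbt2 h.2.symm) (fun h => hItop h.1)
      unfold theta at hC0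
      rw [hrank_top, hdeg_top] at hC0
      have hC := key_ineq τ (rank E1) (rank E2) (rank (I : C)) (rank E2)
        (deg E1) (deg E2) (deg (I : C)) (deg E2) h2 (by omega) hC0
      by_cases hk0 : rank (K : C) = 0
      · -- Φ is mono : r = r2 < r1, use A and C
        have hKbot : K = ⊥ := (hrank_bot E2 K).mpr hk0
        have he0 : deg (K : C) = 0 := by rw [hKbot]; exact hdegbot E2
        have hrI : rank (I : C) = rank E2 := by omega
        have hdI : deg (I : C) = deg E2 := by omega
        rw [hrI, hdI] at hC
        push_cast at hC
        have hr21 : (rank E2 : ℝ) < (rank E1 : ℝ) := by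
          have : rank E2 < rank E1 := by omega
          exact_mod_cast this
        nlinarith [hC, hA, hR1, hR2, mul_pos hR2 (mul_pos (sub_pos.mpr hr21) (sub_pos.mpr hA))]
      · -- kernel and image both proper
        have hKbot : K ≠ ⊥ := fun h => hk0 ((hrank_bot E2 K).mp h)
        have hsubD : IsSubtriple Φ (⊥ : Subobject E1) K := by
          unfold IsSubtriple
          rw [kernelSubobject_arrow_comp]
          exact Subobject.factors_zero
        have hD0 := hst ⊥ K hsubD (fun h => hKbot h.2) (fun h => hbt1 h.1)
        unfold theta at hD0
        rw [hrankbot, hdegbot] at hD0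
        have hD := key_ineq τ (rank E1) (rank E2) 0 (rank (K : C))
          (deg E1) (deg E2) 0 (deg (K : C)) h2 (by omega) hD0
        push_cast at hB hC hD
        -- substitute r = r2 - k, d = d2 - e
        have hrI : (rank (I : C) : ℝ) = (rank E2 : ℝ) - (rank (K : C) : ℝ) := by
          have : (rank E2 : ℝ) = (rank (K : C) : ℝ) + (rank (I : C) : ℝ) := by
            exact_mod_cast hr2k
          linarith
        have hdI : (deg (I : C) : ℝ) = (deg E2 : ℝ) - (deg (K : C) : ℝ) := by
          have : (deg E2 : ℝ) = (deg (K : C) : ℝ) + (deg (I : C) : ℝ) := by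
            exact_mod_cast hd2e
          linarith
        rw [hrI, hdI] at hC
        set k : ℝ := (rank (K : C) : ℝ) with hkdef
        set e : ℝ := (deg (K : C) : ℝ) with hedef
        have hkpos : (0:ℝ) < k := by
          rw [hkdef]; exact_mod_cast Nat.pos_of_ne_zero hk0
        have hkr2 : k < (rank E2 : ℝ) := by
          have : rank (K : C) < rank E2 := by omega
          rw [hkdef]; exact_mod_cast this
        have hrle : (rank E2 : ℝ) - k ≤ (rank E1 : ℝ) := by
          have : rank (I : C) ≤ rank E1 := hrr1
          rw [hkdef, ← hrI]; exact_mod_cast this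
        rcases le_or_gt (k * ((rank E1 : ℝ) + (rank E2 : ℝ)))
          ((rank E2 : ℝ) * (rank E2 : ℝ)) with hm | hm
        · -- m ≥ 0 : use A, C, D
          have hcoef : (0:ℝ) < (rank E1 : ℝ) * (rank E2 : ℝ)
              + k * ((rank E1 : ℝ) + (rank E2 : ℝ)) - (rank E2 : ℝ) * (rank E2 : ℝ) := by
            nlinarith [mul_le_mul_of_nonneg_left hrle hR2.le, hkpos, hR1, hR2]
          have hfin : (rank E1 : ℝ) * (deg E2 : ℝ) * ((rank E2 : ℝ) - k)
              < (rank E2 : ℝ) * (deg E1 : ℝ) * ((rank E2 : ℝ) - k) := by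
            nlinarith [hC, hD, hA, hR1, hR2, mul_pos hcoef (sub_pos.mpr hA),
              mul_lt_mul_of_pos_left hC hR1, mul_lt_mul_of_pos_left hD hR1]
          exact lt_of_mul_lt_mul_right hfin (by linarith : (0:ℝ) ≤ (rank E2 : ℝ) - k)
        · -- m < 0 : use A, B, C
          have hfin : (rank E1 : ℝ) * (deg E2 : ℝ) * ((rank E2 : ℝ) - k)
              < (rank E2 : ℝ) * (deg E1 : ℝ) * ((rank E2 : ℝ) - k) := by
            nlinarith [hB, hC, hA, hR1, hR2, mul_pos (sub_pos.mpr hm) (sub_pos.mpr hA),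
              mul_lt_mul_of_pos_left hB hR1, mul_lt_mul_of_pos_left hC hR1]
          exact lt_of_mul_lt_mul_right hfin (by linarith : (0:ℝ) ≤ (rank E2 : ℝ) - k)
end
end

section
/- Suppose E₁ and E₂ are both stable bundles of the same rank r and degree d over a compact Riemann surface, and Φ: E₂ → E₁ is a nontrivial holomorphic map. Then for every τ > μ(E₁) = d/r, the triple (E₁, E₂, Φ) is τ-stable. -/
open CategoryTheory CategoryTheory.Limits

noncomputable section

universe v u

variable {C : Type u} [Category.{v} C] [Abelian C]

/-!
A nonzero `Φ : E₂ ⟶ E₁` between stable objects of equal slope `μ` is a monomorphism: otherwise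
its kernel `K` is a proper nonzero subobject, so `deg K < rank K · μ`, while
`deg (im Φ) ≤ rank (im Φ) · μ`, and adding these along `0 → K → E₂ → im Φ → 0` gives
`deg E₂ < deg E₂`. Hence every subtriple has `r₂' ≤ r₁'`, and
`(r₁' + r₂') θ_τ = (d₁' - r₁' μ) + (d₂' - r₂' μ) - (r₁' - r₂') (τ - μ)`. All three terms are
`≤ 0`; the last is strictly negative when `r₁' > r₂'`, and when `r₁' = r₂'` the two subobjects
are nonzero and not both everything, so stability makes one of the first two negative.
-/

-- `cokernel (kernel.ι f)` is the coimage of `f`, which is its image in an abelian category.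
def cokernelKernelSubobjectIso {A B : C} (f : A ⟶ B) :
    cokernel (kernelSubobject f).arrow ≅ (imageSubobject f : C) :=
  (cokernelEpiComp (kernelSubobjectIso f).inv _).symm ≪≫
    cokernelIsoOfEq (kernelSubobject_arrow' f) ≪≫ Abelian.coimageIsoImage' f ≪≫
    (imageSubobjectIso f).symm

structure IsAdditiveRankDeg (rank : C → ℕ) (deg : C → ℤ) : Prop where
  eq_bot_iff_rank_eq_zero : ∀ (B : C) (X : Subobject B), X = ⊥ ↔ rank (X : C) = 0
  rank_add : ∀ (B : C) (X : Subobject B), rank B = rank (X : C) + rank (cokernel X.arrow)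
  deg_add : ∀ (B : C) (X : Subobject B), deg B = deg (X : C) + deg (cokernel X.arrow)
  rank_deg_congr : ∀ A B : C, Nonempty (A ≅ B) → rank A = rank B ∧ deg A = deg B

namespace IsAdditiveRankDeg

variable {rank : C → ℕ} {deg : C → ℤ} (h : IsAdditiveRankDeg rank deg)
include h

theorem rank_congr {A B : C} (e : A ≅ B) : rank A = rank B :=
  (h.rank_deg_congr A B ⟨e⟩).1

theorem deg_congr {A B : C} (e : A ≅ B) : deg A = deg B :=
  (h.rank_deg_congr A B ⟨e⟩).2

theorem rank_top (B : C) : rank ((⊤ : Subobject B) : C) = rank B :=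
  h.rank_congr (Subobject.underlyingIso (𝟙 B))

theorem deg_top (B : C) : deg ((⊤ : Subobject B) : C) = deg B :=
  h.deg_congr (Subobject.underlyingIso (𝟙 B))

theorem deg_bot (B : C) : deg ((⊥ : Subobject B) : C) = 0 := by
  have hcoker : cokernel (⊥ : Subobject B).arrow ≅ B :=
    cokernelIsoOfEq Subobject.bot_arrow ≪≫ cokernelZeroIsoTarget
  have := h.deg_add B ⊥
  rw [h.deg_congr hcoker] at this
  omega

theorem rank_le_of_mono {A B : C} (f : A ⟶ B) [Mono f] : rank A ≤ rank B := by
  rw [h.rank_add B (Subobject.mk f), h.rank_congr (Subobject.underlyingIso f)]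
  exact Nat.le_add_right _ _

theorem rank_pos_of_ne_bot {B : C} {X : Subobject B} (hX : X ≠ ⊥) : 0 < rank (X : C) :=
  Nat.pos_of_ne_zero fun h0 => hX ((h.eq_bot_iff_rank_eq_zero B X).2 h0)

theorem rank_eq_rank_kernel_add_rank_image {A B : C} (f : A ⟶ B) :
    rank A = rank (kernelSubobject f : C) + rank (imageSubobject f : C) := by
  rw [h.rank_add A (kernelSubobject f), h.rank_congr (cokernelKernelSubobjectIso f)]

theorem deg_eq_deg_kernel_add_deg_image {A B : C} (f : A ⟶ B) :
    deg A = deg (kernelSubobject f : C) + deg (imageSubobject f : C) := by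
  rw [h.deg_add A (kernelSubobject f), h.deg_congr (cokernelKernelSubobjectIso f)]

theorem deg_lt_rank_mul_bslope_of_bStable {B : C} (hB : BStable rank deg B) {X : Subobject B}
    (hbot : X ≠ ⊥) (htop : X ≠ ⊤) :
    (deg (X : C) : ℝ) < rank (X : C) * bslope (deg B) (rank B) := by
  have hX : (0 : ℝ) < rank (X : C) := by exact_mod_cast h.rank_pos_of_ne_bot hbot
  rw [mul_comm, ← div_lt_iff₀ hX]
  exact hB X hbot htop

theorem deg_le_rank_mul_bslope_of_bStable {B : C} (hB : BStable rank deg B) (X : Subobject B) :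
    (deg (X : C) : ℝ) ≤ rank (X : C) * bslope (deg B) (rank B) := by
  rcases eq_or_ne X ⊥ with rfl | hbot
  · simp [h.deg_bot, (h.eq_bot_iff_rank_eq_zero B ⊥).1 rfl]
  rcases eq_or_ne X ⊤ with rfl | htop
  · have hrank : (rank B : ℝ) ≠ 0 := by
      rw [← h.rank_top]; exact_mod_cast (h.rank_pos_of_ne_bot hbot).ne'
    rw [h.deg_top, h.rank_top, bslope, mul_div_cancel₀ _ hrank]
  exact (h.deg_lt_rank_mul_bslope_of_bStable hB hbot htop).le

theorem mono_of_bStable_of_bslope_le {E1 E2 : C} (hs1 : BStable rank deg E1)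
    (hs2 : BStable rank deg E2) (hμ : bslope (deg E1) (rank E1) ≤ bslope (deg E2) (rank E2))
    {Φ : E2 ⟶ E1} (hΦ : Φ ≠ 0) : Mono Φ := by
  refine Preadditive.mono_of_kernel_zero (Subobject.mk_eq_bot_iff_zero.1 ?_)
  by_contra hbot
  set K := kernelSubobject Φ
  have htop : K ≠ ⊤ := fun htop => hΦ <| by
    have : IsIso K.arrow := (Subobject.isIso_arrow_iff_eq_top K).2 htop
    rw [← cancel_epi K.arrow, kernelSubobject_arrow_comp, comp_zero]
  set μ := bslope (deg E2) (rank E2)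
  have hK := h.deg_lt_rank_mul_bslope_of_bStable hs2 hbot htop
  have hI : (deg (imageSubobject Φ : C) : ℝ) ≤ rank (imageSubobject Φ : C) * μ :=
    (h.deg_le_rank_mul_bslope_of_bStable hs1 _).trans (by gcongr)
  have hrank : (rank E2 : ℝ) ≠ 0 := by
    have := (h.rank_pos_of_ne_bot hbot).trans_le (h.rank_le_of_mono K.arrow)
    positivity
  have hμE2 : (deg E2 : ℝ) = rank E2 * μ := (mul_div_cancel₀ _ hrank).symm
  have hdeg := h.deg_eq_deg_kernel_add_deg_image Φ
  have hrk := h.rank_eq_rank_kernel_add_rank_image Φ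
  rw [hrk, hdeg] at hμE2
  push_cast at hμE2
  linarith

end IsAdditiveRankDeg

theorem thetaTau_same_rank_deg_eq (τ : ℝ) {r a b : ℕ} (d e1 e2 : ℤ) (hr : r ≠ 0)
    (hab : a + b ≠ 0) :
    thetaTau τ r r d d a b e1 e2 =
      ((e1 - a * bslope d r) + (e2 - b * bslope d r) - (a - b) * (τ - bslope d r)) / (a + b) := by
  have hr' : (r : ℝ) ≠ 0 := by exact_mod_cast hr
  have hab' : (a : ℝ) + b ≠ 0 := by exact_mod_cast hab
  simp only [thetaTau, bslope]
  push_cast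
  field_simp
  ring

theorem thetaTau_neg_of_same_rank_deg {τ : ℝ} {r a b : ℕ} {d e1 e2 : ℤ} (hr : r ≠ 0)
    (ha : 0 < a) (hba : b ≤ a) (hτ : bslope d r < τ)
    (h1 : (e1 : ℝ) ≤ a * bslope d r) (h2 : (e2 : ℝ) ≤ b * bslope d r)
    (hstrict : a = b → (e1 : ℝ) < a * bslope d r ∨ (e2 : ℝ) < b * bslope d r) :
    thetaTau τ r r d d a b e1 e2 < 0 := by
  rw [thetaTau_same_rank_deg_eq τ d e1 e2 hr (by omega)]
  refine div_neg_of_neg_of_pos ?_ (by positivity)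
  rcases hba.lt_or_eq with hlt | heq
  · have : (0 : ℝ) < (a - b) * (τ - bslope d r) :=
      mul_pos (sub_pos.2 (by exact_mod_cast hlt)) (sub_pos.2 hτ)
    linarith
  · subst heq
    rw [sub_self, zero_mul, sub_zero]
    rcases hstrict rfl with h | h <;> linarith

theorem tStable_of_stable_same_rank_deg_general
    (rank : C → ℕ) (deg : C → ℤ) (E1 E2 : C) (Φ : E2 ⟶ E1) (r : ℕ) (d : ℤ)
    (hrank_bot : ∀ (B : C) (X : Subobject B), X = ⊥ ↔ rank (X : C) = 0)
    (hrank_add : ∀ (B : C) (X : Subobject B), rank B = rank (X : C) + rank (cokernel X.arrow))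
    (hdeg_add : ∀ (B : C) (X : Subobject B), deg B = deg (X : C) + deg (cokernel X.arrow))
    (hiso : ∀ A B : C, Nonempty (A ≅ B) → rank A = rank B ∧ deg A = deg B)
    (hr1 : rank E1 = r) (hr2 : rank E2 = r) (hd1 : deg E1 = d) (hd2 : deg E2 = d)
    (hs1 : BStable rank deg E1) (hs2 : BStable rank deg E2) (hΦ : Φ ≠ 0) :
    ∀ τ : ℝ, bslope d r < τ → TStable rank deg E1 E2 Φ τ := by
  intro τ hτ E1' E2' hsub hnbot hntop
  subst hr1 hd1
  have h : IsAdditiveRankDeg rank deg := ⟨hrank_bot, hrank_add, hdeg_add, hiso⟩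
  have : Mono Φ := h.mono_of_bStable_of_bslope_le hs1 hs2 (by rw [hr2, hd2]) hΦ
  have : Mono (E1'.factorThru _ hsub) := mono_of_mono_fac (E1'.factorThru_arrow _ hsub)
  have hba := h.rank_le_of_mono (E1'.factorThru _ hsub)
  have ha : 0 < rank (E1' : C) := Nat.pos_of_ne_zero fun h0 =>
    hnbot ⟨(hrank_bot _ _).2 h0, (hrank_bot _ _).2 (by omega)⟩
  have hr : rank E1 ≠ 0 := by have := h.rank_le_of_mono E1'.arrow; omega
  have hle2 := h.deg_le_rank_mul_bslope_of_bStable hs2 E2'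
  rw [hr2, hd2] at hle2
  unfold theta
  rw [hr2, hd2]
  refine thetaTau_neg_of_same_rank_deg hr ha hba hτ
    (h.deg_le_rank_mul_bslope_of_bStable hs1 E1') hle2 fun hab => ?_
  have hbot1 : E1' ≠ ⊥ := fun h0 => ha.ne' ((hrank_bot _ _).1 h0)
  have hbot2 : E2' ≠ ⊥ := fun h0 => ha.ne' (hab ▸ (hrank_bot _ _).1 h0)
  by_cases htop1 : E1' = ⊤
  · have hlt := h.deg_lt_rank_mul_bslope_of_bStable hs2 hbot2 fun htop2 => hntop ⟨htop1, htop2⟩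
    rw [hr2, hd2] at hlt
    exact Or.inr hlt
  · exact Or.inl (h.deg_lt_rank_mul_bslope_of_bStable hs1 hbot1 htop1)

/-- if `E₁` and `E₂` are stable bundles of the same rank and degree and
`Φ ≠ 0`, then the triple is `τ`-stable for every `τ > μ(E₁)`. -/
theorem tStable_of_stable_same_rank_deg
    (rank : C → ℕ) (deg : C → ℤ) (E1 E2 : C) (Φ : E2 ⟶ E1) (r : ℕ) (d : ℤ)
    (hrank_bot : ∀ (B : C) (X : Subobject B), X = ⊥ ↔ rank (X : C) = 0)
    (hrank_top : ∀ B : C, rank ((⊤ : Subobject B) : C) = rank B)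
    (hdeg_top : ∀ B : C, deg ((⊤ : Subobject B) : C) = deg B)
    (hrank_add : ∀ (B : C) (X : Subobject B), rank B = rank (X : C) + rank (cokernel X.arrow))
    (hdeg_add : ∀ (B : C) (X : Subobject B), deg B = deg (X : C) + deg (cokernel X.arrow))
    (hiso : ∀ A B : C, Nonempty (A ≅ B) → rank A = rank B ∧ deg A = deg B)
    (hr : 0 < r)
    (hr1 : rank E1 = r) (hr2 : rank E2 = r) (hd1 : deg E1 = d) (hd2 : deg E2 = d)
    (hs1 : BStable rank deg E1) (hs2 : BStable rank deg E2) (hΦ : Φ ≠ 0) :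
    ∀ τ : ℝ, bslope d r < τ → TStable rank deg E1 E2 Φ τ :=
  tStable_of_stable_same_rank_deg_general rank deg E1 E2 Φ r d hrank_bot hrank_add hdeg_add hiso hr1
    hr2 hd1 hd2 hs1 hs2 hΦ
end
end

section
/- Let T' = (E₁', E₂', Φ') be a subtriple of T = (E₁, E₂, Φ) and let F' ⊆ F be the corresponding SU(2)-invariant subsheaf of the associated extension over X × ℙ¹, so that rank F' = r₁' + r₂' and deg_σ F' = deg E₁' + deg E₂' + σ r₂'. Then μ_σ(F') < μ_σ(F) if and only if θ_τ(T') < 0, where σ = ((r₁+r₂)τ − (deg E₁ + deg E₂))/r₂. -/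
open CategoryTheory CategoryTheory.Limits

noncomputable section

universe v u

variable {C : Type u} [Category.{v} C] [Abelian C]

/-- for the associated extension over `X × ℙ¹`, the slope inequality
`μ_σ(F') < μ_σ(F)` is equivalent to `θ_τ(T') < 0`, with
`σ = ((r₁+r₂)τ − (d₁+d₂))/r₂`. -/
theorem sigmaSlope_lt_iff_thetaTau_neg
    (r1 r2 r1' r2' : ℕ) (d1 d2 d1' d2' : ℤ) (τ σ : ℝ)
    (hr2 : 0 < r2) (hr1 : 0 < r1) (hr' : 0 < r1' + r2')
    (hσ : σ = (((r1 : ℝ) + (r2 : ℝ)) * τ - ((d1 : ℝ) + (d2 : ℝ))) / (r2 : ℝ)) :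
    ((d1' : ℝ) + (d2' : ℝ) + σ * (r2' : ℝ)) / ((r1' : ℝ) + (r2' : ℝ)) <
        ((d1 : ℝ) + (d2 : ℝ) + σ * (r2 : ℝ)) / ((r1 : ℝ) + (r2 : ℝ)) ↔
      thetaTau τ r1 r2 d1 d2 r1' r2' d1' d2' < 0 := by
  have h2 : (0:ℝ) < (r2:ℝ) := by exact_mod_cast hr2
  have h12 : (0:ℝ) < (r1:ℝ) + (r2:ℝ) := by positivity
  have h12' : (0:ℝ) < (r1':ℝ) + (r2':ℝ) := by
    have : (0:ℝ) < ((r1' + r2' : ℕ) : ℝ) := by exact_mod_cast hr'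
    push_cast at this; linarith
  have key : thetaTau τ r1 r2 d1 d2 r1' r2' d1' d2' =
      ((d1' : ℝ) + (d2' : ℝ) + σ * (r2' : ℝ)) / ((r1' : ℝ) + (r2' : ℝ)) -
        ((d1 : ℝ) + (d2 : ℝ) + σ * (r2 : ℝ)) / ((r1 : ℝ) + (r2 : ℝ)) := by
    subst hσ
    unfold thetaTau bslope
    push_cast
    field_simp
    ring
  rw [key, sub_neg]
end
end
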